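/- For every integer i ≥ 1 and every real ι with iβ < ι ≤ (i+1)β, the function ψ satisfies the renewal identity ψ(ι) = ∫_0^{ι−iβ} γ·exp(−γs)·(s + ψ(ι − β − s)) ds + exp(−γ(ι − iβ))·(ι − iβ + ψ(iβ)). -/

import Mathlib

/-!
On `[0, ι − iβ]` the argument `ι − β − s` stays in `[(i−1)β, iβ]`, so in the identity `ψ` may be
replaced by the partial sums `ψ_m(x) = ∑_{k<m} (1/γ) R_k(γ(x − kβ))` (`psiTrunc γ β m x`): `ψ_i`
under the integral, `ψ_{i+1}` outside. From `R_k'(x) = e^{−x} x^k / k!` and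
`R_k = R_{k+1} + e^{−x} x^{k+1} / (k+1)!` one gets
`d/dt [e^{−γt} R_{k+1}(γ(a − t))] = −γ e^{−γt} R_k(γ(a − t))`, hence
`t ↦ e^{−γt} (t + ψ_{m+1}(x − t))` is an antiderivative of `−γ e^{−γt} (t + ψ_m(x − β − t))`,
and the renewal identity is the fundamental theorem of calculus.
-/

open Real Finset

/-- Normalized residual of the `i`-th Taylor approximation of the exponential:
`R_i(x) = (exp x − ∑_{j=0}^{i} x^j/j!) / exp x`. -/
noncomputable def Rres (i : ℕ) (x : ℝ) : ℝ :=
  (Real.exp x - ∑ j ∈ Finset.range (i + 1), x ^ j / (Nat.factorial j : ℝ)) / Real.exp x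

/-- Expected crawl-interval length `ψ(ι) = ∑_{i=0}^{⌊ι/β⌋} (1/γ)·R_i(γ(ι − iβ))`. -/
noncomputable def psi (γ β : ℝ) (ι : ℝ) : ℝ :=
  ∑ i ∈ Finset.range (⌊ι / β⌋₊ + 1), (1 / γ) * Rres i (γ * (ι - (i : ℝ) * β))

lemma Rres_zero_left (x : ℝ) : Rres 0 x = 1 - Real.exp (-x) := by
  simp [Rres, Real.exp_neg, sub_div, Real.exp_ne_zero]

lemma Rres_zero_right (k : ℕ) : Rres k 0 = 0 := by
  simp [Rres, Finset.sum_range_succ']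

lemma Rres_succ (k : ℕ) (x : ℝ) :
    Rres (k + 1) x = Rres k x - Real.exp (-x) * x ^ (k + 1) / (k + 1).factorial := by
  simp only [Rres, Finset.sum_range_succ _ (k + 1), Real.exp_neg]
  field_simp
  ring

lemma hasDerivAt_Rres (k : ℕ) (x : ℝ) :
    HasDerivAt (Rres k) (Real.exp (-x) * x ^ k / k.factorial) x := by
  induction k with
  | zero =>
    have h := ((hasDerivAt_neg x).exp).const_sub 1
    simpa [funext Rres_zero_left] using h
  | succ k ih =>
    have hpow : HasDerivAt (fun y => Real.exp (-y) * y ^ (k + 1) / (k + 1).factorial)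
        ((-Real.exp (-x) * x ^ (k + 1) + Real.exp (-x) * ((k + 1 : ℕ) * x ^ k))
          / (k + 1).factorial) x := by
      have := ((hasDerivAt_neg x).exp.mul (hasDerivAt_pow (k + 1) x)).div_const
        ((k + 1).factorial : ℝ)
      simpa using this
    rw [funext (Rres_succ k)]
    refine (ih.sub hpow).congr_deriv ?_
    rw [Nat.factorial_succ]
    push_cast
    field_simp
    ring

@[fun_prop]
lemma continuous_Rres (k : ℕ) : Continuous (Rres k) :=
  continuous_iff_continuousAt.2 fun x => (hasDerivAt_Rres k x).continuousAt

lemma hasDerivAt_exp_mul_Rres_succ (k : ℕ) (γ a s : ℝ) :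
    HasDerivAt (fun t => Real.exp (-(γ * t)) * Rres (k + 1) (γ * (a - t)))
      (-(γ * Real.exp (-(γ * s)) * Rres k (γ * (a - s)))) s := by
  have hexp : HasDerivAt (fun t => Real.exp (-(γ * t))) (-γ * Real.exp (-(γ * s))) s := by
    simpa [mul_comm] using ((hasDerivAt_id s).const_mul γ).neg.exp
  have harg : HasDerivAt (fun t => γ * (a - t)) (-γ) s := by
    simpa using ((hasDerivAt_id s).const_sub a).const_mul γ
  have hR := (hasDerivAt_Rres (k + 1) (γ * (a - s))).comp s harg
  refine (hexp.mul hR).congr_deriv ?_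
  rw [Function.comp_apply, Rres_succ]
  ring

noncomputable def psiTrunc (γ β : ℝ) (m : ℕ) (x : ℝ) : ℝ :=
  ∑ k ∈ Finset.range m, (1 / γ) * Rres k (γ * (x - k * β))

lemma psi_eq_psiTrunc {γ β x : ℝ} (hβ : 0 < β) {m : ℕ} (hlo : m * β ≤ x)
    (hhi : x ≤ (m + 1) * β) : psi γ β x = psiTrunc γ β (m + 1) x := by
  rcases hhi.lt_or_eq with hlt | rfl
  · have hx : 0 ≤ x := (by positivity : (0 : ℝ) ≤ m * β).trans hlo
    have hfloor : ⌊x / β⌋₊ = m := (Nat.floor_eq_iff (by positivity)).2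
      ⟨(le_div_iff₀ hβ).2 hlo, (div_lt_iff₀ hβ).2 hlt⟩
    rw [psi, hfloor, psiTrunc]
  · -- the floor jumps to `m + 1` here, but the extra term is `R_{m+1}(0) = 0`
    have hfloor : ⌊(m + 1) * β / β⌋₊ = m + 1 := by
      rw [mul_div_cancel_right₀ _ hβ.ne']
      exact_mod_cast Nat.floor_natCast (m + 1)
    rw [psi, hfloor, psiTrunc, Finset.sum_range_succ _ (m + 1)]
    push_cast
    rw [sub_self, mul_zero, Rres_zero_right, mul_zero, add_zero]

lemma psiTrunc_succ (γ β : ℝ) (m : ℕ) (x : ℝ) :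
    psiTrunc γ β (m + 1) x = (1 - Real.exp (-(γ * x))) / γ +
      ∑ k ∈ Finset.range m, (1 / γ) * Rres (k + 1) (γ * (x - (k + 1) * β)) := by
  rw [psiTrunc, Finset.sum_range_succ', add_comm]
  push_cast
  rw [Rres_zero_left]
  ring_nf

lemma continuous_psiTrunc (γ β : ℝ) (m : ℕ) : Continuous (psiTrunc γ β m) := by
  unfold psiTrunc
  fun_prop

lemma hasDerivAt_exp_mul_psiTrunc {γ : ℝ} (hγ : γ ≠ 0) (β : ℝ) (m : ℕ) (x s : ℝ) :
    HasDerivAt (fun t => Real.exp (-(γ * t)) * (t + psiTrunc γ β (m + 1) (x - t)))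
      (-(γ * Real.exp (-(γ * s)) * (s + psiTrunc γ β m (x - β - s)))) s := by
  have hsplit : (fun t => Real.exp (-(γ * t)) * (t + psiTrunc γ β (m + 1) (x - t))) =
      fun t => t * Real.exp (-(γ * t)) + (Real.exp (-(γ * t)) - Real.exp (-(γ * x))) / γ +
        ∑ k ∈ Finset.range m,
          (1 / γ) * (Real.exp (-(γ * t)) * Rres (k + 1) (γ * (x - (k + 1) * β - t))) := by
    funext t
    have hexp : Real.exp (-(γ * t)) * Real.exp (-(γ * (x - t))) = Real.exp (-(γ * x)) := by
      rw [← Real.exp_add]; ring_nf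
    have hsum : Real.exp (-(γ * t)) *
        ∑ k ∈ Finset.range m, (1 / γ) * Rres (k + 1) (γ * (x - t - (k + 1) * β)) =
          ∑ k ∈ Finset.range m,
            (1 / γ) * (Real.exp (-(γ * t)) * Rres (k + 1) (γ * (x - (k + 1) * β - t))) := by
      rw [Finset.mul_sum]
      exact Finset.sum_congr rfl fun k _ => by rw [sub_right_comm]; ring
    rw [psiTrunc_succ, mul_add, mul_add, hsum, ← hexp]
    ring
  have hexp : HasDerivAt (fun t => Real.exp (-(γ * t))) (-γ * Real.exp (-(γ * s))) s := by
    simpa [mul_comm] using ((hasDerivAt_id s).const_mul γ).neg.exp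
  have hsum := HasDerivAt.fun_sum (u := Finset.range m) fun k _ =>
    (hasDerivAt_exp_mul_Rres_succ k γ (x - (k + 1) * β) s).const_mul (1 / γ)
  rw [hsplit]
  refine ((((hasDerivAt_id s).mul hexp).add ((hexp.sub_const _).div_const γ)).add
    hsum).congr_deriv ?_
  have hargs : ∀ k : ℕ, γ * (x - (k + 1) * β - s) = γ * (x - β - s - k * β) := fun k => by ring
  have hfactor : ∑ k ∈ Finset.range m,
      (1 / γ) * -(γ * Real.exp (-(γ * s)) * Rres k (γ * (x - β - s - k * β))) =
        -(γ * Real.exp (-(γ * s)) * psiTrunc γ β m (x - β - s)) := by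
    rw [psiTrunc, Finset.mul_sum, ← Finset.sum_neg_distrib]
    exact Finset.sum_congr rfl fun k _ => by ring
  simp only [hargs, hfactor, id_eq]
  field_simp
  ring

lemma integral_exp_mul_psiTrunc {γ : ℝ} (hγ : γ ≠ 0) (β : ℝ) (m : ℕ) (x T : ℝ) :
    ∫ s in (0 : ℝ)..T, γ * Real.exp (-(γ * s)) * (s + psiTrunc γ β m (x - β - s)) =
      psiTrunc γ β (m + 1) x - Real.exp (-(γ * T)) * (T + psiTrunc γ β (m + 1) (x - T)) := by
  have hcont :
      Continuous fun s => γ * Real.exp (-(γ * s)) * (s + psiTrunc γ β m (x - β - s)) := by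
    have := continuous_psiTrunc γ β m
    fun_prop
  rw [← neg_neg (∫ s in (0 : ℝ)..T, _), ← intervalIntegral.integral_neg,
    intervalIntegral.integral_eq_sub_of_hasDerivAt
      (fun s _ => hasDerivAt_exp_mul_psiTrunc hγ β m x s) (hcont.neg.intervalIntegrable 0 T)]
  simp

/-- For every integer `i ≥ 1` and every real `ι` with `iβ < ι ≤ (i+1)β`, the function `ψ`
satisfies the renewal identity
`ψ(ι) = ∫_0^{ι−iβ} γ·exp(−γs)·(s + ψ(ι − β − s)) ds + exp(−γ(ι − iβ))·(ι − iβ + ψ(iβ))`. -/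
theorem stmt_13 (γ β : ℝ) (hγ : 0 < γ) (hβ : 0 < β) (i : ℕ) (hi : 1 ≤ i) (ι : ℝ)
    (hlo : (i : ℝ) * β < ι) (hhi : ι ≤ ((i : ℝ) + 1) * β) :
    psi γ β ι =
      (∫ s in (0 : ℝ)..(ι - (i : ℝ) * β),
        γ * Real.exp (-(γ * s)) * (s + psi γ β (ι - β - s))) +
      Real.exp (-(γ * (ι - (i : ℝ) * β))) * (ι - (i : ℝ) * β + psi γ β ((i : ℝ) * β)) := by
  obtain ⟨n, rfl⟩ : ∃ n, i = n + 1 := ⟨i - 1, by omega⟩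
  push_cast at hlo hhi ⊢
  have hintegrand : Set.EqOn (fun s => γ * Real.exp (-(γ * s)) * (s + psi γ β (ι - β - s)))
      (fun s => γ * Real.exp (-(γ * s)) * (s + psiTrunc γ β (n + 1) (ι - β - s)))
      (Set.uIcc 0 (ι - (n + 1) * β)) := by
    intro s hs
    rw [Set.uIcc_of_le (by linarith)] at hs
    dsimp only
    rw [psi_eq_psiTrunc hβ (m := n) (by linarith [hs.2]) (by linarith [hs.1])]
  have hψι : psi γ β ι = psiTrunc γ β (n + 1 + 1) ι :=
    psi_eq_psiTrunc hβ (by push_cast; linarith) (by push_cast; linarith)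
  have hψiβ : psi γ β ((n + 1) * β) = psiTrunc γ β (n + 1 + 1) ((n + 1) * β) :=
    psi_eq_psiTrunc hβ (by push_cast; rfl) (by push_cast; linarith)
  rw [intervalIntegral.integral_congr hintegrand, integral_exp_mul_psiTrunc hγ.ne', hψι, hψiβ,
    sub_sub_cancel]
  ring
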